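/- Fix μ̃ > 0, σ > 0, θ̃ ∈ ℝ, S₀ > 0 and T > 0, and define the XOU futures curve f(T) := exp( e^{−μ̃T}·ln S₀ + (1 − e^{−μ̃T})(θ̃ − σ²/(2μ̃)) + (σ²/(4μ̃))(1 − e^{−2μ̃T}) ). If ln S₀ < θ̃ − (σ²/(2μ̃))(1 − e^{−μ̃T}) − ( e^{2μ̃T}/4 + σ²/(2μ̃) )^{1/2} − e^{μ̃T}/2, then the first derivative of f at T is strictly positive and the second derivative of f at T is strictly positive (the futures curve is upward-sloping and convex at T). -/

import Mathlib

/-!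
Write `f = exp ∘ g` with `g` the log-futures curve. Then `g'(t) = μ e^{-μt} w(t)`, where
`w(t) = θ - σ²/(2μ)(1 - e^{-μt}) - ln S₀`, and, since `f'' = f (g'² + g'')`,
`g'² + g'' = μ² e^{-2μt} (w² - e^{μt} w - σ²/(2μ))`. The hypothesis says exactly that
`w(T) - e^{μT}/2` exceeds the positive root `√(e^{2μT}/4 + σ²/(2μ))` of this quadratic in
`w - e^{μT}/2`, so both factors are positive.
-/

open Real

noncomputable section

def xouLogFutures (μ θ σ x t : ℝ) : ℝ :=
  exp (-μ * t) * x + (1 - exp (-μ * t)) * (θ - σ ^ 2 / (2 * μ))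
    + σ ^ 2 / (4 * μ) * (1 - exp (-2 * μ * t))

def xouSlopeFactor (μ θ σ x t : ℝ) : ℝ :=
  θ - σ ^ 2 / (2 * μ) * (1 - exp (-μ * t)) - x

end

theorem hasDerivAt_exp_const_mul (c t : ℝ) :
    HasDerivAt (fun s => exp (c * s)) (c * exp (c * t)) t := by
  simpa [mul_comm] using ((hasDerivAt_id t).const_mul c).exp

theorem hasDerivAt_deriv_exp_comp {g g' : ℝ → ℝ} {g'' x : ℝ}
    (hg : ∀ t, HasDerivAt g (g' t) t) (hg' : HasDerivAt g' g'' x) :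
    HasDerivAt (deriv fun t => exp (g t)) (exp (g x) * (g' x ^ 2 + g'')) x := by
  have hderiv : (deriv fun t => exp (g t)) = fun t => exp (g t) * g' t :=
    funext fun t => (hg t).exp.deriv
  rw [hderiv]
  exact ((hg x).exp.mul hg').congr_deriv (by ring)

theorem lt_sq_sub_mul_of_sqrt_add_half_lt {E c w : ℝ} (hc : 0 ≤ E ^ 2 / 4 + c)
    (h : √(E ^ 2 / 4 + c) + E / 2 < w) : c < w ^ 2 - E * w := by
  have hs := sq_sqrt hc
  nlinarith [sqrt_nonneg (E ^ 2 / 4 + c)]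

section

variable {μ : ℝ} (θ σ x : ℝ)

theorem hasDerivAt_xouLogFutures (hμ : μ ≠ 0) (t : ℝ) :
    HasDerivAt (xouLogFutures μ θ σ x) (μ * exp (-μ * t) * xouSlopeFactor μ θ σ x t) t := by
  have h1 := (hasDerivAt_exp_const_mul (-μ) t).mul_const x
  have h2 := ((hasDerivAt_exp_const_mul (-μ) t).const_sub 1).mul_const (θ - σ ^ 2 / (2 * μ))
  have h3 := ((hasDerivAt_exp_const_mul (-2 * μ) t).const_sub 1).const_mul (σ ^ 2 / (4 * μ))
  refine ((h1.add h2).add h3).congr_deriv ?_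
  rw [xouSlopeFactor, show -2 * μ * t = -μ * t + -μ * t by ring, exp_add]
  field_simp
  ring

theorem hasDerivAt_xouLogFutures_deriv (hμ : μ ≠ 0) (t : ℝ) :
    HasDerivAt (fun t => μ * exp (-μ * t) * xouSlopeFactor μ θ σ x t)
      (-μ ^ 2 * exp (-μ * t) * xouSlopeFactor μ θ σ x t - μ * σ ^ 2 / 2 * exp (-μ * t) ^ 2) t := by
  have he := hasDerivAt_exp_const_mul (-μ) t
  have hw := (((he.const_sub 1).const_mul (σ ^ 2 / (2 * μ))).const_sub θ).sub_const x
  refine ((he.const_mul μ).mul hw).congr_deriv ?_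
  rw [xouSlopeFactor]
  field_simp
  ring

end

theorem xou_term_structure_up_convex_general (μt θt σ S0 T : ℝ) (hμ : 0 < μt) (f : ℝ → ℝ)
    (hf : f = fun T : ℝ => exp (exp (-μt * T) * log S0
      + (1 - exp (-μt * T)) * (θt - σ ^ 2 / (2 * μt))
      + σ ^ 2 / (4 * μt) * (1 - exp (-2 * μt * T))))
    (hln : log S0 < θt - σ ^ 2 / (2 * μt) * (1 - exp (-μt * T)) - Real.sqrt (exp (2 * μt * T) / 4 + σ ^ 2 / (2 * μt)) - exp (μt * T) / 2) :
    0 < deriv f T ∧ 0 < deriv (deriv f) T := by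
  have hg := hasDerivAt_xouLogFutures θt σ (log S0) hμ.ne'
  have hg' := hasDerivAt_xouLogFutures_deriv θt σ (log S0) hμ.ne' T
  change f = fun t => exp (xouLogFutures μt θt σ (log S0) t) at hf
  subst hf
  rw [(hg T).exp.deriv, (hasDerivAt_deriv_exp_comp hg hg').deriv]
  set w := xouSlopeFactor μt θt σ (log S0) T
  have hw : √(exp (μt * T) ^ 2 / 4 + σ ^ 2 / (2 * μt)) + exp (μt * T) / 2 < w := by
    rw [← exp_nat_mul, Nat.cast_ofNat, ← mul_assoc]
    simp only [w, xouSlopeFactor]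
    linarith
  have hw_pos : 0 < w := lt_of_le_of_lt (by positivity) hw
  have hquad : 0 < w ^ 2 - exp (μt * T) * w - σ ^ 2 / (2 * μt) :=
    sub_pos.2 (lt_sq_sub_mul_of_sqrt_add_half_lt (by positivity) hw)
  have hprod : exp (-μt * T) * exp (μt * T) = 1 := by rw [← exp_add]; simp
  have hfactor : (μt * exp (-μt * T) * w) ^ 2
      + (-μt ^ 2 * exp (-μt * T) * w - μt * σ ^ 2 / 2 * exp (-μt * T) ^ 2)
      = μt ^ 2 * exp (-μt * T) ^ 2 * (w ^ 2 - exp (μt * T) * w - σ ^ 2 / (2 * μt)) := by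
    have hc : μt ^ 2 * (σ ^ 2 / (2 * μt)) = μt * σ ^ 2 / 2 := by field_simp
    linear_combination (μt ^ 2 * exp (-μt * T) * w) * hprod + exp (-μt * T) ^ 2 * hc
  refine ⟨by positivity, mul_pos (exp_pos _) ?_⟩
  rw [hfactor]
  positivity

/-- XOU futures term structure: upward-sloping and convex when ln S₀ is below the lower threshold. -/
theorem xou_term_structure_up_convex (μt θt σ S0 T : ℝ) (hμ : 0 < μt) (hσ : 0 < σ) (hS : 0 < S0)
    (hT : 0 < T) (f : ℝ → ℝ)
    (hf : f = fun T : ℝ => exp (exp (-μt * T) * log S0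
      + (1 - exp (-μt * T)) * (θt - σ ^ 2 / (2 * μt))
      + σ ^ 2 / (4 * μt) * (1 - exp (-2 * μt * T))))
    (hln : log S0 < θt - σ ^ 2 / (2 * μt) * (1 - exp (-μt * T)) - Real.sqrt (exp (2 * μt * T) / 4 + σ ^ 2 / (2 * μt)) - exp (μt * T) / 2) :
    0 < deriv f T ∧ 0 < deriv (deriv f) T :=
  xou_term_structure_up_convex_general μt θt σ S0 T hμ f hf hln
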